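/- arXiv:2401.11590 — 9 statements merged into one kernel-verified Lean document; each statement's English description precedes it below -/
import Mathlib

section
/- Every hypergraph on n vertices with n·d edges contains a sub-hypergraph with at least n·d/2 edges whose edge set can be partitioned into groups of size exactly d/2 such that all edges within each group share a common vertex. (Assume d/2 is a positive integer.) -/
lemma stmt1_aux (n m : ℕ) (hm : 0 < m) :
    ∀ S : Finset (Finset (Fin n)),
      ∃ B : Finset (Finset (Finset (Fin n))),
        (∀ b ∈ B, b.card = m ∧ (∃ v : Fin n, ∀ e ∈ b, v ∈ e) ∧ b ⊆ S) ∧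
        (B : Set (Finset (Finset (Fin n)))).PairwiseDisjoint id ∧
        S.card ≤ (B.sup id).card + (n * (m - 1) + 1) := by
  intro S
  induction S using Finset.strongInductionOn with
  | _ S ih =>
  by_cases h : ∃ v : Fin n, m ≤ (S.filter (fun e => v ∈ e)).card
  · obtain ⟨v, hv⟩ := h
    obtain ⟨T, hTsub, hTcard⟩ := Finset.exists_subset_card_eq hv
    have hTS : T ⊆ S := hTsub.trans (Finset.filter_subset _ _)
    have hTne : T.Nonempty := Finset.card_pos.mp (hTcard ▸ hm)
    have hss : S \ T ⊂ S := Finset.sdiff_ssubset hTS hTne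
    obtain ⟨B', hB'props, hB'disj, hB'card⟩ := ih (S \ T) hss
    have hB'subsd : B'.sup id ⊆ S \ T := by
      show B'.sup id ≤ S \ T
      apply Finset.sup_le
      intro b hb
      exact (hB'props b hb).2.2
    have hdisjT : Disjoint T (B'.sup id) :=
      (Finset.disjoint_sdiff).mono_right hB'subsd
    refine ⟨insert T B', ?_, ?_, ?_⟩
    · intro b hb
      rcases Finset.mem_insert.mp hb with rfl | hb
      · refine ⟨hTcard, ⟨v, fun e he => ?_⟩, hTS⟩
        exact (Finset.mem_filter.mp (hTsub he)).2
      · obtain ⟨h1, h2, h3⟩ := hB'props b hb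
        exact ⟨h1, h2, h3.trans (Finset.sdiff_subset)⟩
    · rw [Finset.coe_insert]
      apply hB'disj.insert
      intro b hb _
      exact (Finset.disjoint_sdiff).mono_right ((hB'props b hb).2.2)
    · have hsup : ((insert T B').sup id).card = m + (B'.sup id).card := by
        rw [Finset.sup_insert, id]
        rw [Finset.sup_eq_union]
        rw [Finset.card_union_of_disjoint hdisjT, hTcard]
      have hTle : T.card ≤ S.card := Finset.card_le_card hTS
      have hScard : (S \ T).card = S.card - T.card := Finset.card_sdiff_of_subset hTS
      rw [hsup]
      omega
  · push_neg at h
    refine ⟨∅, by simp, by simp, ?_⟩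
    simp only [Finset.sup_empty, Finset.bot_eq_empty, Finset.card_empty, Nat.zero_add]
    have hsplit : (S.filter (fun e => e = ∅)).card +
        (S.filter (fun e => ¬ e = ∅)).card = S.card :=
      Finset.card_filter_add_card_filter_not _
    have h1 : (S.filter (fun e => e = ∅)).card ≤ 1 := by
      apply Finset.card_le_one.mpr
      intro a ha b hb
      rw [(Finset.mem_filter.mp ha).2, (Finset.mem_filter.mp hb).2]
    have h2 : (S.filter (fun e => ¬ e = ∅)) ⊆
        Finset.univ.biUnion (fun v : Fin n => S.filter (fun e => v ∈ e)) := by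
      intro e he
      obtain ⟨heS, hene⟩ := Finset.mem_filter.mp he
      obtain ⟨v, hv⟩ := Finset.nonempty_iff_ne_empty.mpr hene
      exact Finset.mem_biUnion.mpr ⟨v, Finset.mem_univ v,
        Finset.mem_filter.mpr ⟨heS, hv⟩⟩
    have h3 : (S.filter (fun e => ¬ e = ∅)).card ≤ n * (m - 1) := by
      calc (S.filter (fun e => ¬ e = ∅)).card
          ≤ (Finset.univ.biUnion (fun v : Fin n => S.filter (fun e => v ∈ e))).card :=
            Finset.card_le_card h2
        _ ≤ ∑ v : Fin n, (S.filter (fun e => v ∈ e)).card := Finset.card_biUnion_le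
        _ ≤ ∑ _v : Fin n, (m - 1) := by
            apply Finset.sum_le_sum
            intro v _
            have := h v
            omega
        _ = n * (m - 1) := by simp [Finset.sum_const, Finset.card_univ, mul_comm]
    omega

/-- Every hypergraph on `n` vertices with `n·d` edges (here `d = 2*m` so that
`d/2 = m` is a positive integer) contains a sub-hypergraph with at least `n·d/2`
edges whose edge set can be partitioned into buckets of exactly `m` edges, all
edges of a bucket sharing a common vertex. -/
theorem stmt1 (n m : ℕ) (hm : 0 < m) (H : Finset (Finset (Fin n)))
    (hcard : H.card = n * (2 * m)) :
    ∃ H' ⊆ H, 2 * H'.card ≥ n * (2 * m) ∧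
      ∃ P : Finpartition H', ∀ B ∈ P.parts,
        B.card = m ∧ ∃ v : Fin n, ∀ e ∈ B, v ∈ e := by
  obtain ⟨B, hBprops, hBdisj, hBcard⟩ := stmt1_aux n m hm H
  refine ⟨B.sup id, ?_, ?_, ?_⟩
  · show B.sup id ≤ H
    apply Finset.sup_le
    intro b hb
    exact (hBprops b hb).2.2
  · -- cardinality
    rcases Nat.eq_zero_or_pos n with rfl | hn
    · simp
    · obtain ⟨k, rfl⟩ : ∃ k, m = k + 1 := ⟨m - 1, by omega⟩
      simp only [Nat.add_sub_cancel] at hBcard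
      rw [hcard] at hBcard
      have h3 : n * (2 * (k + 1)) = 2 * (n * k) + 2 * n := by ring
      rw [h3] at hBcard ⊢
      omega
  · refine ⟨⟨B, ?_, rfl, ?_⟩, ?_⟩
    · exact Finset.supIndep_iff_pairwiseDisjoint.mpr hBdisj
    · intro hbot
      have := (hBprops _ hbot).1
      simp only [Finset.bot_eq_empty, Finset.card_empty] at this
      omega
    · intro b hb
      exact ⟨(hBprops b hb).1, (hBprops b hb).2.1⟩
end

section
/- Let C: F_2^m → F_2^n be a linear 3-query locally decodable code with associated 3-uniform hypergraph matchings H_1,...,H_m such that for every x ∈ F_2^m, every i ∈ [m], and every hyperedge e ∈ H_i, the sum over j ∈ e of C(x)_j equals x_i. Then in any even cover of the multi-hypergraph ∪_{i∈[m]} H_i, each matching H_i contributes an even number of hyperedges. -/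
/-- For a linear 3-query LDC in normal form, with matchings `H i` satisfying the decoding
property `⊕_{j∈e} C(x)_j = x_i`, any even cover of the union multi-hypergraph uses an even
number of hyperedges from each matching `H i`. -/
theorem stmt5 (m n : ℕ) (C : (Fin m → ZMod 2) →ₗ[ZMod 2] (Fin n → ZMod 2))
    (H : Fin m → Finset (Finset (Fin n)))
    (h3 : ∀ i : Fin m, ∀ e ∈ H i, e.card = 3)
    (hmatch : ∀ i : Fin m, ∀ e ∈ H i, ∀ f ∈ H i, e ≠ f → Disjoint e f)
    (hdec : ∀ (x : Fin m → ZMod 2) (i : Fin m), ∀ e ∈ H i, ∑ j ∈ e, C x j = x i)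
    (S : Fin m → Finset (Finset (Fin n))) (hS : ∀ i, S i ⊆ H i)
    (hcover : ∀ v : Fin n, Even (∑ i : Fin m, ((S i).filter (fun e => v ∈ e)).card)) :
    ∀ i : Fin m, Even ((S i).card) := by
  intro i
  set x : Fin m → ZMod 2 := Pi.single i 1 with hx
  have key : (∑ k : Fin m, ∑ e ∈ S k, ∑ j ∈ e, C x j) = ((S i).card : ZMod 2) := by
    have h1 : ∀ k : Fin m, ∀ e ∈ S k, (∑ j ∈ e, C x j) = x k := by
      intro k e he
      exact hdec x k e (hS k he)
    calc (∑ k : Fin m, ∑ e ∈ S k, ∑ j ∈ e, C x j)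
        = ∑ k : Fin m, ∑ _e ∈ S k, x k := by
          refine Finset.sum_congr rfl fun k _ => Finset.sum_congr rfl (h1 k)
      _ = ∑ k : Fin m, ((S k).card : ZMod 2) * x k := by
          simp [Finset.sum_const, nsmul_eq_mul]
      _ = ((S i).card : ZMod 2) := by
          rw [Finset.sum_eq_single i]
          · simp [hx]
          · intro b _ hb; simp [hx, Pi.single_eq_of_ne hb]
          · simp
  have key2 : (∑ k : Fin m, ∑ e ∈ S k, ∑ j ∈ e, C x j) = 0 := by
    have : ∀ k : Fin m, (∑ e ∈ S k, ∑ j ∈ e, C x j)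
        = ∑ v : Fin n, (((S k).filter (fun e => v ∈ e)).card : ZMod 2) * C x v := by
      intro k
      rw [Finset.sum_comm' (s := S k) (t := fun e => e)
        (t' := Finset.univ) (s' := fun v => (S k).filter (fun e => v ∈ e))]
      · simp [Finset.sum_const, nsmul_eq_mul, Finset.filter_filter]
      · intro e v; simp [Finset.mem_filter]
    rw [Finset.sum_congr rfl fun k _ => this k, Finset.sum_comm]
    refine Finset.sum_eq_zero fun v _ => ?_
    rw [← Finset.sum_mul, ← Nat.cast_sum]
    have hv := hcover v
    have : ((∑ k : Fin m, ((S k).filter (fun e => v ∈ e)).card : ℕ) : ZMod 2) = 0 := by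
      rw [ZMod.natCast_eq_zero_iff]
      exact hv.two_dvd
    rw [this, zero_mul]
  have : ((S i).card : ZMod 2) = 0 := by rw [← key, key2]
  rw [ZMod.natCast_eq_zero_iff] at this
  exact (even_iff_two_dvd).mpr this
end

section
/- Let H be a k-uniform hypergraph, let j ≤ k, and let t, m, e be parameters with e ≤ e(H). Then there exists a sub-hypergraph H' ⊆ H such that either (1) e(H') ≥ e(H) − e and every vertex set R of size t satisfies deg_{H'}(R) < m, or (2) H' has an (m,t)-bucket decomposition and e(H') ≥ e. -/
/-!
Greedy cleaning: while some `t`-set `R` lies in at least `m` edges, remove `m` of them as a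
bucket with common set `R`. Each round removes exactly `m` edges, so either the removal stops
after deleting fewer than `e` edges (leaving all `t`-codegrees below `m`), or the removed
buckets already contain at least `e` edges and form a bucket decomposition of their union.
-/

/-- An `(m,t)`-bucket decomposition: a partition of the edge set into buckets of exactly
`m` edges, all edges of a bucket containing a common `t`-element vertex set. -/
def HasBucketDecomp {n : ℕ} (H' : Finset (Finset (Fin n))) (m t : ℕ) : Prop :=
  ∃ P : Finpartition H', ∀ B ∈ P.parts, B.card = m ∧
    ∃ X : Finset (Fin n), X.card = t ∧ ∀ e ∈ B, X ⊆ e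

open Finset

theorem exists_bucket_of_le_card_filter {α : Type*} [DecidableEq α] {H : Finset (Finset α)}
    {R : Finset α} {m : ℕ} (h : m ≤ (H.filter (fun E => R ⊆ E)).card) :
    ∃ B ⊆ H, B.card = m ∧ ∀ E ∈ B, R ⊆ E := by
  obtain ⟨B, hB, hBcard⟩ := exists_subset_card_eq h
  exact ⟨B, hB.trans (filter_subset _ _), hBcard, fun E hE => (mem_filter.1 (hB hE)).2⟩

namespace HasBucketDecomp

variable {n : ℕ} {m t : ℕ}

theorem empty : HasBucketDecomp (∅ : Finset (Finset (Fin n))) m t :=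
  ⟨Finpartition.empty _, by simp⟩

theorem union_bucket {H B : Finset (Finset (Fin n))} {X : Finset (Fin n)}
    (hH : HasBucketDecomp H m t) (hdisj : Disjoint H B) (hm : 0 < m) (hB : B.card = m)
    (hX : X.card = t) (hBX : ∀ E ∈ B, X ⊆ E) :
    HasBucketDecomp (H ∪ B) m t := by
  obtain ⟨P, hP⟩ := hH
  have hBne : B ≠ ⊥ := nonempty_iff_ne_empty.1 (card_pos.1 (hB ▸ hm))
  refine ⟨P.extend hBne hdisj sup_eq_union, fun B' hB' => ?_⟩
  rw [Finpartition.extend_parts, mem_insert] at hB'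
  rcases hB' with rfl | hB'
  · exact ⟨hB, X, hX, hBX⟩
  · exact hP B' hB'

end HasBucketDecomp

theorem stmt6_general (n t m e : ℕ) (hm : 0 < m) (H : Finset (Finset (Fin n)))
    (he : e ≤ H.card) :
    ∃ H' ⊆ H,
      (H'.card ≥ H.card - e ∧
        ∀ R : Finset (Fin n), R.card = t → (H'.filter (fun E => R ⊆ E)).card < m) ∨
      (HasBucketDecomp H' m t ∧ H'.card ≥ e) := by
  induction e using Nat.strong_induction_on generalizing H with
  | _ e IH =>
  by_cases hdeg : ∀ R : Finset (Fin n), R.card = t → (H.filter (fun E => R ⊆ E)).card < m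
  · exact ⟨H, subset_rfl, Or.inl ⟨Nat.sub_le _ _, hdeg⟩⟩
  push Not at hdeg
  obtain ⟨R, hR, hRm⟩ := hdeg
  obtain ⟨B, hBH, hBcard, hBR⟩ := exists_bucket_of_le_card_filter hRm
  by_cases hem : e ≤ m
  · refine ⟨B, hBH, Or.inr ⟨?_, by omega⟩⟩
    simpa using HasBucketDecomp.empty.union_bucket (disjoint_empty_left B) hm hBcard hR hBR
  have hrest : (H \ B).card = H.card - m := by rw [card_sdiff_of_subset hBH, hBcard]
  obtain ⟨H', hH'sub, hH'⟩ := IH (e - m) (by omega) (H \ B) (by omega)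
  rcases hH' with ⟨hcard, hdeg⟩ | ⟨hdec, hcard⟩
  · exact ⟨H', hH'sub.trans sdiff_subset, Or.inl ⟨by omega, hdeg⟩⟩
  · have hdisj : Disjoint H' B := sdiff_disjoint.mono_left hH'sub
    refine ⟨H' ∪ B, union_subset (hH'sub.trans sdiff_subset) hBH,
      Or.inr ⟨hdec.union_bucket hdisj hm hBcard hR hBR, ?_⟩⟩
    rw [card_union_of_disjoint hdisj]
    omega

/-- Cleaning lemma: for a `k`-uniform hypergraph `H`, `j ≤ k` and parameters `t, m, e` with
`e ≤ e(H)`, there is `H' ⊆ H` with either `e(H') ≥ e(H) − e` and every `t`-set of codegree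
less than `m`, or `H'` has an `(m,t)`-bucket decomposition and `e(H') ≥ e`. -/
theorem stmt6 (n k j t m e : ℕ) (hm : 0 < m) (H : Finset (Finset (Fin n)))
    (hunif : ∀ E ∈ H, E.card = k) (hj : j ≤ k) (he : e ≤ H.card) :
    ∃ H' ⊆ H,
      (H'.card ≥ H.card - e ∧
        ∀ R : Finset (Fin n), R.card = t → (H'.filter (fun E => R ⊆ E)).card < m) ∨
      (HasBucketDecomp H' m t ∧ H'.card ≥ e) :=
  stmt6_general n t m e hm H he
end

section
/- Let H be a k-uniform hypergraph (k odd) admitting a (2, (k+1)/2)-bucket decomposition with buckets ({Y_i, Z_i}, X_i). Fix j = |Y_i ∩ Z_i| for buckets where this value equals some j ≥ (k+1)/2, and form the multi-hypergraph G on the same vertex set with edges Y_i ⊕ Z_i (symmetric difference) for these buckets. Then any even cover in G of size s yields an even cover in H of size 2s. -/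
open Finset

theorem Finset.card_filter_add_card_filter_eq {ι : Type*} (s : Finset ι) (p q : ι → Prop)
    [DecidablePred p] [DecidablePred q] :
    #{i ∈ s | p i} + #{i ∈ s | q i} = #{i ∈ s | Xor (p i) (q i)} + 2 * #{i ∈ s | p i ∧ q i} := by
  simp only [card_filter, mul_sum, ← sum_add_distrib]
  refine sum_congr rfl fun i _ => ?_
  by_cases hp : p i <;> by_cases hq : q i <;> simp [hp, hq]

theorem Finset.even_card_filter_add_iff_even_card_filter_xor {ι : Type*} (s : Finset ι)
    (p q : ι → Prop) [DecidablePred p] [DecidablePred q] :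
    Even (#{i ∈ s | p i} + #{i ∈ s | q i}) ↔ Even #{i ∈ s | Xor (p i) (q i)} := by
  rw [card_filter_add_card_filter_eq, Nat.even_add, iff_true_intro (even_two_mul _), iff_true]

theorem Finset.card_bind_pair {ι α : Type*} (s : Finset ι) (f g : ι → α) :
    Multiset.card (s.val.bind fun i => {f i, g i}) = 2 * #s := by
  simp [two_mul]

theorem Finset.card_filter_bind_pair {ι α : Type*} (s : Finset ι) (f g : ι → α) (p : α → Prop)
    [DecidablePred p] :
    Multiset.card ((s.val.bind fun i => {f i, g i}).filter p) =
      #{i ∈ s | p (f i)} + #{i ∈ s | p (g i)} := by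
  simp only [Multiset.filter_bind, Multiset.card_bind, card_filter, ← sum_add_distrib]
  refine congrArg Multiset.sum (Multiset.map_congr rfl fun i _ => ?_)
  by_cases hf : p (f i) <;> by_cases hg : p (g i) <;>
    simp [Multiset.filter_cons, Multiset.filter_singleton, hf, hg]

theorem stmt8_general (n : ℕ) (ι : Type)
    (Y Z : ι → Finset (Fin n))
    (S : Finset ι)
    (hcover : ∀ v : Fin n,
      Even ((S.filter (fun i => v ∈ symmDiff (Y i) (Z i))).card)) :
    Multiset.card (S.val.bind (fun i => {Y i, Z i})) = 2 * S.card ∧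
    ∀ v : Fin n,
      Even (Multiset.card ((S.val.bind (fun i => {Y i, Z i})).filter (fun E => v ∈ E))) := by
  refine ⟨S.card_bind_pair Y Z, fun v => ?_⟩
  rw [S.card_filter_bind_pair, even_card_filter_add_iff_even_card_filter_xor]
  convert hcover v using 4 with i
  exact mem_symmDiff.symm

/-- For a `k`-uniform hypergraph (`k` odd) with a `(2,(k+1)/2)`-bucket decomposition into
pairs `{Y i, Z i}` sharing a common `(k+1)/2`-set `X i`, restricted to buckets with
`|Y i ∩ Z i| = j` for some fixed `j ≥ (k+1)/2`: any even cover of size `s` in the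
multi-hypergraph of symmetric differences `Y i ⊕ Z i` yields an even cover of size `2s`
in `H`, namely the multiset `{Y i, Z i : i ∈ S}`. -/
theorem stmt8 (n k : ℕ) (hk : Odd k) (ι : Type) (I : Finset ι)
    (H : Finset (Finset (Fin n)))
    (Y Z X : ι → Finset (Fin n))
    (hY : ∀ i ∈ I, Y i ∈ H) (hZ : ∀ i ∈ I, Z i ∈ H)
    (hYk : ∀ i ∈ I, (Y i).card = k) (hZk : ∀ i ∈ I, (Z i).card = k)
    (hne : ∀ i ∈ I, Y i ≠ Z i)
    (hX : ∀ i ∈ I, (X i).card = (k + 1) / 2 ∧ X i ⊆ Y i ∩ Z i)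
    (j : ℕ) (hj : (k + 1) / 2 ≤ j)
    (hcap : ∀ i ∈ I, ((Y i) ∩ (Z i)).card = j)
    (S : Finset ι) (hSI : S ⊆ I) (hSne : S.Nonempty)
    (hcover : ∀ v : Fin n,
      Even ((S.filter (fun i => v ∈ symmDiff (Y i) (Z i))).card)) :
    Multiset.card (S.val.bind (fun i => {Y i, Z i})) = 2 * S.card ∧
    ∀ v : Fin n,
      Even (Multiset.card ((S.val.bind (fun i => {Y i, Z i})).filter (fun E => v ∈ E))) :=
  stmt8_general n ι Y Z S hcover
end

section
/- For even k and integers k ≤ ℓ ≤ n/log₂ n with n sufficiently large, the Kikuchi graph G of a k-uniform hypergraph H on [n] has at least (1/2)·e(H)·binom(k, k/2)·binom(n−k, ℓ−k/2) edges, and binom(n, ℓ) ≤ binom(n−k, ℓ−k/2)·(4n/ℓ)^{k/2}. -/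
/-!
Each hyperedge `E` yields the Kikuchi pairs `(A ∪ W, (E \ A) ∪ W)` with `A` a half of `E` and `W`
an `(ℓ - k/2)`-subset of its complement, and distinct triples `(E, A, W)` give distinct pairs,
since they are recovered as `S ∆ T`, `S ∩ E` and `S \ E`.

For the binomial bound, passing from `binom(a, b)` to `binom(a - 2, b - 1)` loses the factor
`a (a - 1) / (b (a - b))`. Along the `k/2` steps `a ≤ n`, `b ≥ ℓ/2` and `a - b ≥ n/2` (as `4ℓ ≤ n`,
which is where `ℓ ≤ n / log₂ n` with `n ≥ 16` enters), so each factor is at most `4n/ℓ`.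
-/

namespace Finset

variable {α : Type*} [DecidableEq α] {A E W : Finset α}

theorem union_inter_eq_left_of_subset_of_disjoint (hA : A ⊆ E) (hW : Disjoint W E) :
    (A ∪ W) ∩ E = A := by
  rw [union_inter_distrib_right, inter_eq_left.mpr hA, disjoint_iff_inter_eq_empty.mp hW,
    union_empty]

theorem union_sdiff_eq_right_of_subset_of_disjoint (hA : A ⊆ E) (hW : Disjoint W E) :
    (A ∪ W) \ E = W := by
  rw [union_sdiff_distrib, sdiff_eq_empty_iff_subset.mpr hA, hW.sdiff_eq_left, empty_union]

theorem symmDiff_union_sdiff_union (hA : A ⊆ E) (hW : Disjoint W E) :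
    symmDiff (A ∪ W) (E \ A ∪ W) = E := by
  ext x
  have hxA : x ∈ A → x ∈ E := @hA x
  have hxW : x ∈ W → x ∉ E := fun h => disjoint_left.mp hW h
  simp only [mem_symmDiff, mem_union, mem_sdiff]
  tauto

end Finset

theorem Nat.choose_add_two_add_one_mul (a b : ℕ) :
    (a + 2).choose (b + 1) * ((b + 1) * (a + 1 - b)) = a.choose b * ((a + 2) * (a + 1)) := by
  have h1 := Nat.add_one_mul_choose_eq (a + 1) b
  have h2 := Nat.choose_mul_succ_eq a b
  calc (a + 2).choose (b + 1) * ((b + 1) * (a + 1 - b))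
      = (a + 2) * ((a + 1).choose b * (a + 1 - b)) := by rw [← mul_assoc, ← h1]; ring
    _ = a.choose b * ((a + 2) * (a + 1)) := by rw [← h2]; ring

theorem Nat.choose_add_two_le_choose_mul {a b : ℕ} {c : ℝ} (hba : b ≤ a)
    (h : ((a + 2) * (a + 1) : ℝ) ≤ c * ((b + 1) * (a + 1 - b))) :
    ((a + 2).choose (b + 1) : ℝ) ≤ a.choose b * c := by
  have hba' : (b : ℝ) ≤ a := by exact_mod_cast hba
  have hpos : (0 : ℝ) < (b + 1) * (a + 1 - b) := mul_pos (by positivity) (by linarith)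
  have key := congrArg (Nat.cast (R := ℝ)) (Nat.choose_add_two_add_one_mul a b)
  push_cast [Nat.cast_sub (by omega : b ≤ a + 1)] at key
  rw [← mul_le_mul_iff_of_pos_right hpos, key, mul_assoc]
  exact mul_le_mul_of_nonneg_left h (Nat.cast_nonneg _)

theorem Nat.choose_le_choose_sub_mul_pow {n ℓ m : ℕ} (hn : 4 * ℓ ≤ n) (hm : 2 * m ≤ ℓ) :
    (n.choose ℓ : ℝ) ≤ (n - 2 * m).choose (ℓ - m) * (4 * n / ℓ) ^ m := by
  induction m with
  | zero => simp
  | succ m ih =>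
    obtain ⟨a, ha⟩ : ∃ a, n - 2 * m = a + 2 := ⟨n - 2 * m - 2, by omega⟩
    obtain ⟨b, hb⟩ : ∃ b, ℓ - m = b + 1 := ⟨ℓ - m - 1, by omega⟩
    have hℓ : (0 : ℝ) < ℓ := by exact_mod_cast (show 0 < ℓ by omega)
    have hx : (ℓ : ℝ) / 2 ≤ b + 1 := by
      have : (ℓ : ℝ) ≤ 2 * (b + 1) := by exact_mod_cast (by omega : ℓ ≤ 2 * (b + 1))
      linarith
    have hy : (n : ℝ) / 2 ≤ a + 1 - b := by
      have : (n + 2 * b : ℝ) ≤ 2 * (a + 1) := by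
        exact_mod_cast (by omega : n + 2 * b ≤ 2 * (a + 1))
      linarith
    have han : (a : ℝ) + 2 ≤ n := by exact_mod_cast (by omega : a + 2 ≤ n)
    have step : ((a + 2).choose (b + 1) : ℝ) ≤ a.choose b * (4 * n / ℓ) := by
      refine Nat.choose_add_two_le_choose_mul (by omega) ?_
      calc ((a : ℝ) + 2) * (a + 1) ≤ n * n := by nlinarith
        _ = 4 * n / ℓ * (ℓ / 2 * (n / 2)) := by field_simp; ring
        _ ≤ 4 * n / ℓ * ((b + 1) * (a + 1 - b)) := by gcongr
    rw [show n - 2 * (m + 1) = a by omega, show ℓ - (m + 1) = b by omega, pow_succ]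
    calc (n.choose ℓ : ℝ) ≤ (a + 2).choose (b + 1) * (4 * n / ℓ) ^ m := by
          rw [← ha, ← hb]; exact ih (by omega)
      _ ≤ a.choose b * (4 * n / ℓ) * (4 * n / ℓ) ^ m := by gcongr
      _ = a.choose b * ((4 * n / ℓ) ^ m * (4 * n / ℓ)) := by ring

theorem four_mul_le_of_le_div_logb {n ℓ : ℕ} (hn : 16 ≤ n) (hℓ : (ℓ : ℝ) ≤ n / Real.logb 2 n) :
    4 * ℓ ≤ n := by
  have hlog : (4 : ℝ) ≤ Real.logb 2 n := by
    rw [Real.le_logb_iff_rpow_le one_lt_two (by positivity)]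
    norm_num [hn]
  have : (ℓ : ℝ) ≤ n / 4 := hℓ.trans (by gcongr)
  have : (4 * ℓ : ℝ) ≤ n := by linarith
  exact_mod_cast this

def IsKikuchiEdge {α : Type*} [DecidableEq α] (H : Finset (Finset α)) (j ℓ : ℕ)
    (S T : Finset α) : Prop :=
  S.card = ℓ ∧ T.card = ℓ ∧ ∃ E ∈ H, symmDiff S T = E ∧ (S ∩ E).card = j ∧ (T ∩ E).card = j

open Finset in
theorem card_mul_choose_mul_choose_le_card_isKikuchiEdge {α : Type*} [Fintype α]
    [DecidableEq α] (H : Finset (Finset α)) {j ℓ : ℕ} (hjℓ : j ≤ ℓ)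
    (hH : ∀ E ∈ H, E.card = 2 * j) :
    H.card * (2 * j).choose j * (Fintype.card α - 2 * j).choose (ℓ - j) ≤
      Nat.card {p : Finset α × Finset α // IsKikuchiEdge H j ℓ p.1 p.2} := by
  classical
  let D := H.sigma fun E => E.powersetCard j ×ˢ Eᶜ.powersetCard (ℓ - j)
  have hD : D.card = H.card * (2 * j).choose j * (Fintype.card α - 2 * j).choose (ℓ - j) := by
    rw [card_sigma, sum_congr rfl fun E hE => by
      rw [card_product, card_powersetCard, card_powersetCard, card_compl, hH E hE], sum_const,
      smul_eq_mul, mul_assoc]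
  have mem_D {E A W} (ht : ⟨E, A, W⟩ ∈ D) :
      E ∈ H ∧ (A ⊆ E ∧ A.card = j) ∧ Disjoint W E ∧ W.card = ℓ - j := by
    simpa [D, mem_sigma, mem_product, mem_powersetCard, subset_compl_iff_disjoint_right] using ht
  let f : (_ : Finset α) × Finset α × Finset α → Finset α × Finset α :=
    fun t => (t.2.1 ∪ t.2.2, t.1 \ t.2.1 ∪ t.2.2)
  have maps : ∀ t ∈ D, f t ∈ univ.filter fun p => IsKikuchiEdge H j ℓ p.1 p.2 := by
    rintro ⟨E, A, W⟩ ht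
    obtain ⟨hE, ⟨hAE, hA⟩, hWE, hW⟩ := mem_D ht
    refine mem_filter.mpr ⟨mem_univ _, ?_, ?_, E, hE, symmDiff_union_sdiff_union hAE hWE, ?_, ?_⟩
    · rw [card_union_of_disjoint (hWE.mono_right hAE).symm, hA, hW]
      omega
    · rw [card_union_of_disjoint (hWE.mono_right sdiff_subset).symm, card_sdiff_of_subset hAE,
        hH E hE, hA, hW]
      omega
    · rw [union_inter_eq_left_of_subset_of_disjoint hAE hWE, hA]
    · rw [union_inter_eq_left_of_subset_of_disjoint sdiff_subset hWE, card_sdiff_of_subset hAE,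
        hH E hE, hA]
      omega
  have inj : Set.InjOn f D := by
    rintro ⟨E, A, W⟩ ht ⟨E', A', W'⟩ ht' hf
    obtain ⟨-, ⟨hAE, -⟩, hWE, -⟩ := mem_D ht
    obtain ⟨-, ⟨hAE', -⟩, hWE', -⟩ := mem_D ht'
    simp only [f, Prod.mk.injEq] at hf
    obtain rfl : E = E' := by
      rw [← symmDiff_union_sdiff_union hAE hWE, ← symmDiff_union_sdiff_union hAE' hWE', hf.1, hf.2]
    obtain rfl : A = A' := by
      rw [← union_inter_eq_left_of_subset_of_disjoint hAE hWE,
        ← union_inter_eq_left_of_subset_of_disjoint hAE' hWE', hf.1]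
    obtain rfl : W = W' := by
      rw [← union_sdiff_eq_right_of_subset_of_disjoint hAE hWE,
        ← union_sdiff_eq_right_of_subset_of_disjoint hAE' hWE', hf.1]
    rfl
  rw [← hD, Nat.card_eq_fintype_card, Fintype.card_subtype]
  exact card_le_card_of_injOn f maps inj

/-- Edge count of the Kikuchi graph (even `k`, `k ≤ ℓ ≤ n/log₂ n`, `n` large): the number
of ordered pairs `(S,T)` forming an edge (which is twice the number of edges) is at least
`e(H)·binom(k,k/2)·binom(n−k,ℓ−k/2)`, and moreover
`binom(n,ℓ) ≤ binom(n−k,ℓ−k/2)·(4n/ℓ)^{k/2}`. -/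
theorem stmt11 :
    ∃ N : ℕ, ∀ n : ℕ, N ≤ n → ∀ k ℓ : ℕ, Even k → 0 < k → k ≤ ℓ →
      (ℓ : ℝ) ≤ (n : ℝ) / Real.logb 2 n →
      ∀ H : Finset (Finset (Fin n)), (∀ E ∈ H, E.card = k) →
        ((Nat.card {p : Finset (Fin n) × Finset (Fin n) //
            p.1.card = ℓ ∧ p.2.card = ℓ ∧ ∃ E ∈ H, symmDiff p.1 p.2 = E ∧
              (p.1 ∩ E).card = k / 2 ∧ (p.2 ∩ E).card = k / 2} : ℝ) ≥
          (H.card : ℝ) * (k.choose (k / 2)) * ((n - k).choose (ℓ - k / 2))) ∧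
        ((n.choose ℓ : ℝ) ≤
          ((n - k).choose (ℓ - k / 2) : ℝ) * (4 * n / ℓ) ^ (k / 2)) := by
  refine ⟨16, fun n hn k ℓ hk _ hkℓ hℓ H hH => ?_⟩
  obtain ⟨j, rfl⟩ := even_iff_two_dvd.mp hk
  rw [Nat.mul_div_cancel_left j two_pos]
  constructor
  · have := card_mul_choose_mul_choose_le_card_isKikuchiEdge H (by omega : j ≤ ℓ) hH
    rw [Fintype.card_fin] at this
    exact_mod_cast this
  · exact Nat.choose_le_choose_sub_mul_pow (four_mul_le_of_le_div_logb hn hℓ) hkℓ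
end

section
/- Let H be a k-uniform hypergraph on [n] (k odd) in which no set of (k−1) vertices is contained in more than one edge. In the flower ℓ-Kikuchi graph, any edge {S, T} is created by at most 2^{k³} good flower gadgets: i.e., the number of flower gadgets F = (C, P₁,...,P_k) such that S ⊕ T = P₁ ⊕ ... ⊕ P_k ⊕ C and |S ∩ (P_i∖{v_i})| = |T ∩ (P_i∖{v_i})| = (k−1)/2 for all i, is at most 2^{k³}. -/
/-!
Since the petals are pairwise disjoint and `P i ∩ C = {v i}`, the iterated symmetric difference
`P₁ ⊕ ⋯ ⊕ P_k ⊕ C` is the disjoint union of the tips `P i ∖ C`, each of size `k - 1`. So every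
tip lies in `S ⊕ T`, which has at most `k (k - 1)` elements. By the codegree condition a tip
determines its petal, the petal minus its tip is `{v i}`, and `v` determines `C`; hence a gadget is
determined by a `k`-tuple of subsets of `S ⊕ T`, and there are at most
`2 ^ (k (k - 1) k) ≤ 2 ^ (k ^ 3)` of them.
-/

/-- The iterated symmetric difference `P₁ ⊕ ⋯ ⊕ P_k ⊕ C`. -/
def totalSymmDiff {n k : ℕ} (C : Finset (Fin n)) (P : Fin k → Finset (Fin n)) :
    Finset (Fin n) :=
  (List.ofFn P).foldr (fun A B => symmDiff A B) C

open Finset Function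

theorem List.foldr_symmDiff_of_pairwise_disjoint {α : Type*} [GeneralizedBooleanAlgebra α]
    {l : List α} (hl : l.Pairwise _root_.Disjoint) (c : α) :
    l.foldr (fun a b => symmDiff a b) c = symmDiff (l.foldr (· ⊔ ·) ⊥) c := by
  induction l with
  | nil => simp
  | cons a l ih =>
    rw [List.pairwise_cons] at hl
    have hdisj : _root_.Disjoint a (l.foldr (· ⊔ ·) ⊥) := by
      classical
      rw [List.foldr_sup_eq_sup_toFinset, Finset.disjoint_sup_right]
      exact fun b hb => hl.1 b (List.mem_toFinset.1 hb)
    rw [List.foldr_cons, List.foldr_cons, ih hl.2, ← symmDiff_assoc, hdisj.symmDiff_eq_sup]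

theorem totalSymmDiff_eq_sup_symmDiff {n k : ℕ} {C : Finset (Fin n)} {P : Fin k → Finset (Fin n)}
    (hP : Pairwise (Disjoint on P)) : totalSymmDiff C P = symmDiff (univ.sup P) C := by
  rw [totalSymmDiff, List.foldr_symmDiff_of_pairwise_disjoint
    (List.pairwise_ofFn.2 fun _ _ h => hP h.ne), ← Multiset.sup_coe, Finset.sup_def,
    Fin.univ_val_map]

theorem Nat.card_le_two_pow_of_injective_of_subset {G α ι : Type*} [Fintype ι]
    {D : Finset α} {m : ℕ} (f : G → ι → Finset α) (hf : Injective f)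
    (hsub : ∀ g i, f g i ⊆ D) (hD : Nonempty G → #D ≤ m) :
    Nat.card G ≤ 2 ^ (m * Fintype.card ι) := by
  rcases isEmpty_or_nonempty G with hG | hG
  · simp
  let f' : G → ι → D.powerset := fun g i => ⟨f g i, mem_powerset.2 (hsub g i)⟩
  have hf' : Injective f' := fun g g' h =>
    hf (funext fun i => congrArg Subtype.val (congrFun h i))
  calc Nat.card G ≤ Nat.card (ι → D.powerset) := Nat.card_le_card_of_injective f' hf'
    _ = 2 ^ (#D * Fintype.card ι) := by
      rw [Nat.card_fun, Nat.card_eq_fintype_card (α := D.powerset), Fintype.card_coe,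
        card_powerset, Nat.card_eq_fintype_card, pow_mul]
    _ ≤ 2 ^ (m * Fintype.card ι) := by gcongr; exacts [one_le_two, hD hG]

section Flower

variable {α ι : Type*} [DecidableEq α] [Fintype ι]

structure IsFlower (H : Finset (Finset α)) (C : Finset α) (v : ι → α) (P : ι → Finset α) :
    Prop where
  petal_mem : ∀ i, P i ∈ H
  pairwise_disjoint : Pairwise (Disjoint on P)
  petal_inter_center : ∀ i, P i ∩ C = {v i}
  center_eq : C = univ.image v

variable {H : Finset (Finset α)} {C C' : Finset α} {v v' : ι → α} {P P' : ι → Finset α}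

namespace IsFlower

theorem card_petal_sdiff {r : ℕ} (hF : IsFlower H C v P) (hunif : ∀ E ∈ H, #E = r) (i : ι) :
    #(P i \ C) = r - 1 := by
  rw [card_sdiff, inter_comm, hF.petal_inter_center, hunif _ (hF.petal_mem i), card_singleton]

theorem center_subset_sup (hF : IsFlower H C v P) : C ⊆ univ.sup P := by
  rw [hF.center_eq, image_subset_iff]
  intro i _
  have hvi : v i ∈ P i ∩ C := hF.petal_inter_center i ▸ mem_singleton_self (v i)
  exact le_sup (f := P) (mem_univ i) (mem_inter.1 hvi).1

theorem eq_of_petal_sdiff_eq {r : ℕ} (hF : IsFlower H C v P) (hF' : IsFlower H C' v' P')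
    (hunif : ∀ E ∈ H, #E = r) (hcodeg : ∀ R : Finset α, #R = r - 1 →
      #(H.filter fun E => R ⊆ E) ≤ 1)
    (h : ∀ i, P i \ C = P' i \ C') : C = C' ∧ v = v' ∧ P = P' := by
  have hP : P = P' := funext fun i =>
    card_le_one.1 (hcodeg _ (hF.card_petal_sdiff hunif i))
      _ (mem_filter.2 ⟨hF.petal_mem i, sdiff_subset⟩)
      _ (mem_filter.2 ⟨hF'.petal_mem i, h i ▸ sdiff_subset⟩)
  -- the centre vertex `v i` is what the petal loses when its tip `P i \ C` is removed
  have hv : v = v' := funext fun i => singleton_injective <| by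
    rw [← hF.petal_inter_center, ← hF'.petal_inter_center, ← sdiff_sdiff_self_left,
      ← sdiff_sdiff_self_left, h i, hP]
  exact ⟨by rw [hF.center_eq, hF'.center_eq, hv], hv, hP⟩

end IsFlower

end Flower

namespace IsFlower

variable {n k : ℕ} {H : Finset (Finset (Fin n))} {C : Finset (Fin n)} {v : Fin k → Fin n}
  {P : Fin k → Finset (Fin n)}

theorem totalSymmDiff_eq (hF : IsFlower H C v P) :
    totalSymmDiff C P = univ.sup fun i => P i \ C := by
  rw [totalSymmDiff_eq_sup_symmDiff hF.pairwise_disjoint, symmDiff_comm,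
    symmDiff_of_le hF.center_subset_sup, Finset.sup_sdiff_right]

theorem card_totalSymmDiff_le (hF : IsFlower H C v P) (hunif : ∀ E ∈ H, #E = k) :
    #(totalSymmDiff C P) ≤ k * (k - 1) := by
  calc #(totalSymmDiff C P) ≤ ∑ i, #(P i \ C) := by
        rw [hF.totalSymmDiff_eq, sup_eq_biUnion]; exact card_biUnion_le
    _ = k * (k - 1) := by simp [hF.card_petal_sdiff hunif]

end IsFlower

theorem card_flowers_totalSymmDiff_eq_le {n k : ℕ} {H : Finset (Finset (Fin n))}
    (hunif : ∀ E ∈ H, #E = k)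
    (hcodeg : ∀ R : Finset (Fin n), #R = k - 1 → #(H.filter fun E => R ⊆ E) ≤ 1)
    (D : Finset (Fin n)) :
    Nat.card {F : Finset (Fin n) × (Fin k → Fin n) × (Fin k → Finset (Fin n)) //
      IsFlower H F.1 F.2.1 F.2.2 ∧ totalSymmDiff F.1 F.2.2 = D} ≤ 2 ^ (k ^ 3) := by
  refine (Nat.card_le_two_pow_of_injective_of_subset (D := D) (m := k * (k - 1))
    (fun F i => F.1.2.2 i \ F.1.1) ?_ ?_ ?_).trans ?_
  · rintro ⟨⟨C, v, P⟩, hF, _⟩ ⟨⟨C', v', P'⟩, hF', _⟩ h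
    obtain ⟨rfl, rfl, rfl⟩ := hF.eq_of_petal_sdiff_eq hF' hunif hcodeg (congrFun h)
    rfl
  · rintro ⟨⟨C, v, P⟩, hF, hD⟩ i
    show P i \ C ⊆ D
    rw [← hD, hF.totalSymmDiff_eq]
    exact le_sup (f := fun i => P i \ C) (mem_univ i)
  · rintro ⟨⟨⟨C, v, P⟩, hF, rfl⟩⟩
    exact hF.card_totalSymmDiff_le hunif
  · rw [Fintype.card_fin]
    gcongr
    · exact one_le_two
    · calc k * (k - 1) * k ≤ k * k * k := by gcongr; exact Nat.sub_le k 1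
        _ = k ^ 3 := by ring

theorem stmt13_general (n k : ℕ)
    (H : Finset (Finset (Fin n))) (hunif : ∀ E ∈ H, E.card = k)
    (hcodeg : ∀ R : Finset (Fin n), R.card = k - 1 →
      (H.filter (fun E => R ⊆ E)).card ≤ 1)
    (ℰ : Fin n → Finset (Finset (Fin n))) (hℰ : ∀ v : Fin n, ∀ E ∈ ℰ v, E ∈ H ∧ v ∈ E)
    (S T : Finset (Fin n)) :
    Nat.card {g : Finset (Fin n) × (Fin k → Fin n) × (Fin k → Finset (Fin n)) //
      g.1 ∈ H ∧ Function.Injective g.2.1 ∧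
      g.1 = Finset.image g.2.1 Finset.univ ∧
      (∀ i, g.2.2 i ∈ ℰ (g.2.1 i)) ∧
      (∀ i j, i ≠ j → Disjoint (g.2.2 i) (g.2.2 j)) ∧
      (∀ i, g.2.2 i ∩ g.1 = {g.2.1 i}) ∧
      symmDiff S T = totalSymmDiff g.1 g.2.2 ∧
      (∀ i, (S ∩ (g.2.2 i \ {g.2.1 i})).card = (k - 1) / 2) ∧
      (∀ i, (T ∩ (g.2.2 i \ {g.2.1 i})).card = (k - 1) / 2)} ≤ 2 ^ (k ^ 3) := by
  refine (Nat.card_le_card_of_injective _ (Subtype.impEmbedding _ _ ?_).injective).trans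
    (card_flowers_totalSymmDiff_eq_le hunif hcodeg (symmDiff S T))
  rintro ⟨C, v, P⟩ ⟨-, -, hC, hPℰ, hdisj, hcore, hD, -, -⟩
  exact ⟨⟨fun i => (hℰ _ _ (hPℰ i)).1, fun i j => hdisj i j, hcore, hC⟩, hD.symm⟩

/-- In a `k`-uniform hypergraph (`k` odd) in which every `(k−1)`-set lies in at most one
edge, any edge `{S,T}` of the flower `ℓ`-Kikuchi graph is created by at most `2^{k³}`
flower gadgets `(C, v, P)`. -/
theorem stmt13 (n k ℓ : ℕ) (hk : Odd k)
    (H : Finset (Finset (Fin n))) (hunif : ∀ E ∈ H, E.card = k)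
    (hcodeg : ∀ R : Finset (Fin n), R.card = k - 1 →
      (H.filter (fun E => R ⊆ E)).card ≤ 1)
    (ℰ : Fin n → Finset (Finset (Fin n))) (hℰ : ∀ v : Fin n, ∀ E ∈ ℰ v, E ∈ H ∧ v ∈ E)
    (S T : Finset (Fin n)) (hS : S.card = ℓ) (hT : T.card = ℓ) :
    Nat.card {g : Finset (Fin n) × (Fin k → Fin n) × (Fin k → Finset (Fin n)) //
      g.1 ∈ H ∧ Function.Injective g.2.1 ∧
      g.1 = Finset.image g.2.1 Finset.univ ∧
      (∀ i, g.2.2 i ∈ ℰ (g.2.1 i)) ∧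
      (∀ i j, i ≠ j → Disjoint (g.2.2 i) (g.2.2 j)) ∧
      (∀ i, g.2.2 i ∩ g.1 = {g.2.1 i}) ∧
      symmDiff S T = totalSymmDiff g.1 g.2.2 ∧
      (∀ i, (S ∩ (g.2.2 i \ {g.2.1 i})).card = (k - 1) / 2) ∧
      (∀ i, (T ∩ (g.2.2 i \ {g.2.1 i})).card = (k - 1) / 2)} ≤ 2 ^ (k ^ 3) :=
  stmt13_general n k H hunif hcodeg ℰ hℰ S T
end

section
/- In the flower ℓ-Kikuchi graph G of a k-uniform hypergraph H (k odd): if G contains a closed walk whose edges arise from good flower gadgets {C^{(j)}, P₁^{(j)},...,P_k^{(j)}} (j ranging over the steps of the walk), then the symmetric difference over all j of (P₁^{(j)} ⊕ ... ⊕ P_k^{(j)} ⊕ C^{(j)}) is empty. Consequently, the multiset of all hyperedges C^{(j)}, P_i^{(j)} appearing an odd number of times forms an even cover of H of size at most (k+1) times the walk length. -/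
/-- The multiset of all hyperedges (centers and petals) of the gadgets along a walk. -/
def walkEdges {n k r : ℕ} (C : Fin r → Finset (Fin n))
    (P : Fin r → Fin k → Finset (Fin n)) : Multiset (Finset (Fin n)) :=
  Multiset.bind Finset.univ.val (fun j : Fin r => (C j) ::ₘ (List.ofFn (P j) : Multiset _))

/-!
Work with indicators in `ZMod 2`, where symmetric difference becomes addition. Summed around
the closed walk, the indicator of `x` in `S j ∆ S (j + 1)` counts every `S j` twice, hence
vanishes. The same sum, expanded through the gadgets, is the number of times `x` lies on a
hyperedge of the walk, which modulo 2 only sees the hyperedges of odd multiplicity.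
-/

open Finset

section Parity

variable {α : Type*}

lemma card_filter_cast_zmod_two (s : Finset α) (p : α → Prop) [DecidablePred p] :
    ((#(s.filter p) : ℕ) : ZMod 2) = ∑ a ∈ s, if p a then 1 else 0 := by
  rw [card_filter, Nat.cast_sum]
  exact sum_congr rfl fun a _ => by split_ifs <;> simp

variable [DecidableEq α]

lemma ite_mem_symmDiff_zmod_two (x : α) (s t : Finset α) :
    (if x ∈ symmDiff s t then (1 : ZMod 2) else 0)
      = (if x ∈ s then 1 else 0) + (if x ∈ t then 1 else 0) := by
  by_cases hs : x ∈ s <;> by_cases ht : x ∈ t <;> simp [mem_symmDiff, hs, ht]; decide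

lemma ite_mem_foldr_symmDiff_zmod_two (x : α) (s : Finset α) (l : List (Finset α)) :
    (if x ∈ l.foldr (fun A B => symmDiff A B) s then (1 : ZMod 2) else 0)
      = (l.map fun A => if x ∈ A then (1 : ZMod 2) else 0).sum + if x ∈ s then 1 else 0 := by
  induction l with
  | nil => simp only [List.foldr_nil, List.map_nil, List.sum_nil, zero_add]; congr
  | cons A l ih =>
    rw [List.foldr_cons, ite_mem_symmDiff_zmod_two, ih, List.map_cons, List.sum_cons, add_assoc]

lemma even_card_filter_mem_symmDiff_succ {r : ℕ} [NeZero r] (S : Fin r → Finset α) (x : α) :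
    Even #{j | x ∈ symmDiff (S j) (S (j + 1))} := by
  rw [← ZMod.natCast_eq_zero_iff_even, card_filter_cast_zmod_two]
  simp only [ite_mem_symmDiff_zmod_two, sum_add_distrib]
  rw [Fintype.sum_equiv (Equiv.addRight 1) (fun j => if x ∈ S (j + 1) then (1 : ZMod 2) else 0)
    (fun j => if x ∈ S j then 1 else 0) fun j => rfl]
  exact CharTwo.add_self_eq_zero _

lemma Multiset.sum_map_eq_sum_filter_odd_count (M : Multiset α) (f : α → ZMod 2) :
    (M.map f).sum = ∑ a ∈ M.toFinset.filter (fun a => Odd (M.count a)), f a := by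
  rw [Finset.sum_multiset_map_count, sum_filter]
  refine sum_congr rfl fun a _ => ?_
  rcases Nat.even_or_odd (M.count a) with h | h
  · simp [nsmul_eq_mul, ZMod.natCast_eq_zero_iff_even.2 h, Nat.not_odd_iff_even.2 h]
  · simp [nsmul_eq_mul, ZMod.natCast_eq_one_iff_odd.2 h, h]

end Parity

section Walk

variable {n k r : ℕ}

lemma ite_mem_totalSymmDiff_zmod_two (x : Fin n) (C : Finset (Fin n))
    (P : Fin k → Finset (Fin n)) :
    (if x ∈ totalSymmDiff C P then (1 : ZMod 2) else 0)
      = (if x ∈ C then 1 else 0) + ∑ i, if x ∈ P i then 1 else 0 := by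
  rw [totalSymmDiff, ite_mem_foldr_symmDiff_zmod_two, List.map_ofFn, List.sum_ofFn, add_comm]
  rfl

lemma sum_map_walkEdges {β : Type*} [AddCommMonoid β] (C : Fin r → Finset (Fin n))
    (P : Fin r → Fin k → Finset (Fin n)) (f : Finset (Fin n) → β) :
    ((walkEdges C P).map f).sum = ∑ j, (f (C j) + ∑ i, f (P j i)) := by
  rw [walkEdges, Multiset.map_bind, Multiset.sum_bind]
  refine sum_congr rfl fun j _ => ?_
  rw [Multiset.map_cons, Multiset.sum_cons, Multiset.map_coe, Multiset.sum_coe, List.map_ofFn,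
    List.sum_ofFn]
  rfl

lemma card_walkEdges (C : Fin r → Finset (Fin n)) (P : Fin r → Fin k → Finset (Fin n)) :
    Multiset.card (walkEdges C P) = (k + 1) * r := by
  rw [walkEdges, Multiset.card_bind]
  change ∑ j : Fin r, _ = _
  simp [mul_comm]

end Walk

theorem stmt14_general (n k r : ℕ) [NeZero r]
    (S : Fin r → Finset (Fin n))
    (C : Fin r → Finset (Fin n))
    (P : Fin r → Fin k → Finset (Fin n))
    (hwalk : ∀ j : Fin r, symmDiff (S j) (S (j + 1)) = totalSymmDiff (C j) (P j)) :
    (∀ x : Fin n, Even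
      ((Finset.univ.filter (fun j : Fin r => x ∈ totalSymmDiff (C j) (P j))).card)) ∧
    (∀ x : Fin n, Even
      ((((walkEdges C P).toFinset.filter
          (fun E => Odd ((walkEdges C P).count E))).filter (fun E => x ∈ E)).card)) ∧
    ((walkEdges C P).toFinset.filter
        (fun E => Odd ((walkEdges C P).count E))).card ≤ (k + 1) * r := by
  have hcover (x : Fin n) : Even #{j | x ∈ totalSymmDiff (C j) (P j)} := by
    simpa only [hwalk] using even_card_filter_mem_symmDiff_succ S x
  refine ⟨hcover, fun x => ?_, ?_⟩
  · have hx := hcover x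
    rw [← ZMod.natCast_eq_zero_iff_even, card_filter_cast_zmod_two] at hx ⊢
    rw [← Multiset.sum_map_eq_sum_filter_odd_count, sum_map_walkEdges]
    simpa only [ite_mem_totalSymmDiff_zmod_two] using hx
  · calc _ ≤ (walkEdges C P).toFinset.card := card_filter_le _ _
      _ ≤ Multiset.card (walkEdges C P) := Multiset.toFinset_card_le _
      _ = (k + 1) * r := card_walkEdges C P

/-- Along a closed walk in the flower `ℓ`-Kikuchi graph, the total symmetric difference of
the quantities `P₁⁽ʲ⁾ ⊕ ⋯ ⊕ P_k⁽ʲ⁾ ⊕ C⁽ʲ⁾` vanishes; consequently the set of hyperedges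
appearing an odd number of times among all centers and petals is an even cover of `H` of
size at most `(k+1)·r`. -/
theorem stmt14 (n k ℓ r : ℕ) (hk : Odd k) [NeZero r]
    (H : Finset (Finset (Fin n))) (hunif : ∀ E ∈ H, E.card = k)
    (S : Fin r → Finset (Fin n)) (hScard : ∀ j, (S j).card = ℓ)
    (C : Fin r → Finset (Fin n)) (v : Fin r → Fin k → Fin n)
    (P : Fin r → Fin k → Finset (Fin n))
    (hgadget : ∀ j : Fin r,
      C j ∈ H ∧ Function.Injective (v j) ∧
      C j = Finset.image (v j) Finset.univ ∧
      (∀ i, P j i ∈ H) ∧ (∀ i i', i ≠ i' → Disjoint (P j i) (P j i')) ∧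
      (∀ i, P j i ∩ C j = {v j i}))
    (hpetal : ∀ j : Fin r, ∀ i,
      ((S j) ∩ (P j i \ {v j i})).card = (k - 1) / 2 ∧
      ((S (j + 1)) ∩ (P j i \ {v j i})).card = (k - 1) / 2)
    (hwalk : ∀ j : Fin r, symmDiff (S j) (S (j + 1)) = totalSymmDiff (C j) (P j)) :
    (∀ x : Fin n, Even
      ((Finset.univ.filter (fun j : Fin r => x ∈ totalSymmDiff (C j) (P j))).card)) ∧
    (∀ x : Fin n, Even
      ((((walkEdges C P).toFinset.filter
          (fun E => Odd ((walkEdges C P).count E))).filter (fun E => x ∈ E)).card)) ∧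
    ((walkEdges C P).toFinset.filter
        (fun E => Odd ((walkEdges C P).count E))).card ≤ (k + 1) * r :=
  stmt14_general n k r S C P hwalk
end

section
/- Let H be a k-uniform hypergraph (k odd) on n vertices with n·d edges and minimum degree at least d/(10k), in which every pair of vertices has codegree at most m(2) < d/(100k³), and for each vertex v fix a set E_v of exactly d/(10k) edges containing v. Then the number of flower gadgets (C, P₁,...,P_k) with each P_i ∈ E_{v_i} is at least (n·d/(2k))·∏_{i=1}^{k}(d/(10k) − i·k·m(2)), which is at least n·d^{k+1}/(20k)^k. -/
/-!
Every edge `C` of `H` is a possible centre; fix an enumeration `v₁, …, v_k` of it and choose the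
petals greedily. An edge of `E_{v_i}` is unusable as `P_i` only if it meets one of the at most
`i k` vertices of `C ∖ {v_i}` and of `P₁, …, P_{i-1}`, none of which is `v_i`; each such
vertex lies together with `v_i` in at most `m(2)` edges. Hence there are at least
`|H| · ∏ (d/(10k) − i k m(2))` gadgets. For the second inequality, `m(2) < d/(100k³)` makes the
`i`-th factor at least `(d/(20k))(2 − i/(5k))`, and `∏ (2 − i/(5k)) ≥ 2k` for `k ≥ 3`
(directly for `k = 3`, and from `(9/5)^k ≥ 2k` for `k ≥ 4`).
-/

open Finset

section GreedyCount

variable {α : Type*} [Fintype α] [DecidableEq α] [Nonempty α]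

theorem prod_le_card_filter_forall_mem {k : ℕ} (valid : Fin k → (Fin k → α) → Finset α)
    (B : Fin k → ℕ) (hvalid : ∀ i P Q, (∀ j < i, P j = Q j) → valid i P = valid i Q)
    (hB : ∀ i P, (∀ j < i, P j ∈ valid j P) → B i ≤ #(valid i P)) :
    ∏ i, B i ≤ #{P | ∀ i, P i ∈ valid i P} := by
  induction k with
  | zero => simp
  | succ k ih =>
    obtain ⟨a₀⟩ := ‹Nonempty α›
    set first := valid 0 fun _ => a₀
    have hfirst : ∀ P, valid 0 P = first := fun P => hvalid 0 _ _ fun j hj => absurd hj (by simp)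
    set rest : α → Finset (Fin k → α) := fun a =>
      {Q | ∀ i, Q i ∈ valid i.succ (Fin.cons a Q)}
    have hrest : ∀ a ∈ first, ∏ i : Fin k, B i.succ ≤ #(rest a) := by
      intro a ha
      refine ih (fun i Q => valid i.succ (Fin.cons a Q)) _ (fun i Q Q' h => ?_) (fun i Q hQ => ?_)
      · refine hvalid _ _ _ fun j hj => ?_
        induction j using Fin.cases with
        | zero => rfl
        | succ j => exact h j (Fin.succ_lt_succ_iff.1 hj)
      · refine hB _ _ fun j hj => ?_
        induction j using Fin.cases with
        | zero => simpa [hfirst] using ha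
        | succ j => simpa using hQ j (Fin.succ_lt_succ_iff.1 hj)
    calc ∏ i, B i = B 0 * ∏ i : Fin k, B i.succ := Fin.prod_univ_succ B
      _ ≤ ∑ _a ∈ first, ∏ i : Fin k, B i.succ := by
        rw [sum_const, smul_eq_mul]
        exact Nat.mul_le_mul_right _ (hfirst (fun _ => a₀) ▸ hB 0 _ (by simp))
      _ ≤ ∑ a ∈ first, #(rest a) := sum_le_sum hrest
      _ = #(first.sigma rest) := (card_sigma _ _).symm
      _ ≤ #{P | ∀ i, P i ∈ valid i P} := by
        refine card_le_card_of_injOn (fun x => Fin.cons x.1 x.2) (fun x hx => ?_) ?_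
        · obtain ⟨ha, hQ⟩ := mem_sigma.1 hx
          simp only [rest, mem_filter, mem_univ, true_and] at hQ
          simp only [mem_coe, mem_filter, mem_univ, true_and]
          intro i
          induction i using Fin.cases with
          | zero => simpa [hfirst] using ha
          | succ i => simpa using hQ i
        · rintro ⟨a, Q⟩ - ⟨a', Q'⟩ - h
          obtain ⟨rfl, rfl⟩ := Fin.cons_inj.1 h
          rfl

end GreedyCount

section Petals

variable {V : Type*} [DecidableEq V] {H : Finset (Finset V)} {m : ℕ}

theorem card_filter_not_disjoint_le {s : Finset (Finset V)} {F : Finset V} {w : V}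
    (hcodeg : ∀ u w : V, u ≠ w → #{E ∈ H | u ∈ E ∧ w ∈ E} ≤ m)
    (hs : s ⊆ {E ∈ H | w ∈ E}) (hw : w ∉ F) :
    #{a ∈ s | ¬Disjoint F a} ≤ #F * m := by
  calc #{a ∈ s | ¬Disjoint F a} ≤ #(F.biUnion fun u => {E ∈ H | w ∈ E ∧ u ∈ E}) := by
        refine card_le_card fun a ha => ?_
        obtain ⟨has, hFa⟩ := mem_filter.1 ha
        obtain ⟨u, huF, hua⟩ := not_disjoint_iff.1 hFa
        obtain ⟨haH, hwa⟩ := mem_filter.1 (hs has)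
        exact mem_biUnion.2 ⟨u, huF, mem_filter.2 ⟨haH, hwa, hua⟩⟩
    _ ≤ ∑ u ∈ F, #{E ∈ H | w ∈ E ∧ u ∈ E} := card_biUnion_le
    _ ≤ #F * m := by
        simpa using sum_le_card_nsmul F _ m fun u hu => hcodeg w u (ne_of_mem_of_not_mem hu hw).symm

variable {k : ℕ} (ℰ : V → Finset (Finset V))

def petalCandidates (C : Finset V) (v : Fin k → V) (P : Fin k → Finset V) (i : Fin k) :
    Finset (Finset V) :=
  {a ∈ ℰ (v i) | a ∩ C = {v i} ∧ ∀ j < i, Disjoint (P j) a}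

variable {ℰ}

theorem petalCandidates_congr {C : Finset V} {v : Fin k → V} {P Q : Fin k → Finset V}
    {i : Fin k} (h : ∀ j < i, P j = Q j) :
    petalCandidates ℰ C v P i = petalCandidates ℰ C v Q i :=
  filter_congr fun _ _ => and_congr_right fun _ => forall₂_congr fun j hj => by rw [h j hj]

theorem card_le_card_petalCandidates_add (hunif : ∀ E ∈ H, #E = k)
    (hcodeg : ∀ u w : V, u ≠ w → #{E ∈ H | u ∈ E ∧ w ∈ E} ≤ m)
    (hℰ : ∀ v, ℰ v ⊆ {E ∈ H | v ∈ E}) {C : Finset V} (hC : #C = k)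
    {v : Fin k → V} (hv : Function.Injective v) (hvC : ∀ i, v i ∈ C)
    {P : Fin k → Finset V} {i : Fin k} (hP : ∀ j < i, P j ∈ petalCandidates ℰ C v P j) :
    #(ℰ (v i)) ≤ #(petalCandidates ℰ C v P i) + (i + 1) * k * m := by
  have hPj : ∀ j < i, #(P j) = k ∧ P j ∩ C = {v j} := fun j hj => by
    obtain ⟨hPℰ, hPC, -⟩ := mem_filter.1 (hP j hj)
    exact ⟨hunif _ (mem_filter.1 (hℰ _ hPℰ)).1, hPC⟩
  set F := C.erase (v i) ∪ (Iio i).biUnion P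
  have hFcard : #F ≤ (i + 1) * k := by
    calc #F ≤ #C + ∑ j ∈ Iio i, #(P j) :=
          (card_union_le _ _).trans (add_le_add (card_erase_le) card_biUnion_le)
      _ = (i + 1) * k := by
          rw [sum_congr rfl fun j hj => (hPj j (mem_Iio.1 hj)).1, sum_const, Fin.card_Iio, hC,
            smul_eq_mul]
          ring
  have hviF : v i ∉ F := by
    simp only [F, mem_union, mem_erase, ne_eq, not_true_eq_false, false_and, mem_biUnion, mem_Iio,
      false_or, not_exists, not_and]
    intro j hj hvij
    have : v i ∈ P j ∩ C := mem_inter.2 ⟨hvij, hvC i⟩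
    rw [(hPj j hj).2, mem_singleton] at this
    exact hj.ne' (hv this)
  have hgood : {a ∈ ℰ (v i) | Disjoint F a} ⊆ petalCandidates ℰ C v P i := by
    intro a ha
    obtain ⟨haℰ, hFa⟩ := mem_filter.1 ha
    refine mem_filter.2 ⟨haℰ, ?_, fun j hj => hFa.mono_left ?_⟩
    · have hvi : v i ∈ a ∩ C := mem_inter.2 ⟨(mem_filter.1 (hℰ _ haℰ)).2, hvC i⟩
      refine eq_singleton_iff_unique_mem.2 ⟨hvi, fun u hu => ?_⟩
      by_contra hne
      obtain ⟨hua, huC⟩ := mem_inter.1 hu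
      exact disjoint_left.1 hFa (mem_union_left _ (mem_erase.2 ⟨hne, huC⟩)) hua
    · exact subset_union_right.trans' (subset_biUnion_of_mem P (mem_Iio.2 hj))
  calc #(ℰ (v i)) = #{a ∈ ℰ (v i) | Disjoint F a} + #{a ∈ ℰ (v i) | ¬Disjoint F a} :=
        (card_filter_add_card_filter_not _).symm
    _ ≤ #(petalCandidates ℰ C v P i) + #F * m :=
        add_le_add (card_le_card hgood) (card_filter_not_disjoint_le hcodeg (hℰ _) hviF)
    _ ≤ #(petalCandidates ℰ C v P i) + (i + 1) * k * m := by gcongr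

end Petals

section Gadgets

variable {V : Type*} [DecidableEq V]

def IsFlowerGadget (k : ℕ) (H : Finset (Finset V)) (ℰ : V → Finset (Finset V))
    (g : Finset V × (Fin k → V) × (Fin k → Finset V)) : Prop :=
  g.1 ∈ H ∧ Function.Injective g.2.1 ∧ g.1 = Finset.image g.2.1 Finset.univ ∧
    (∀ i, g.2.2 i ∈ ℰ (g.2.1 i)) ∧ (∀ i j, i ≠ j → Disjoint (g.2.2 i) (g.2.2 j)) ∧
    (∀ i, g.2.2 i ∩ g.1 = {g.2.1 i})

theorem Finset.exists_injective_image_univ_eq {k : ℕ} {C : Finset V} (h : #C = k) :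
    ∃ v : Fin k → V, Function.Injective v ∧ C = image v univ := by
  set e := C.equivFinOfCardEq h
  refine ⟨fun i => e.symm i, Subtype.val_injective.comp e.symm.injective, ?_⟩
  ext x
  simp only [mem_image, mem_univ, true_and]
  exact ⟨fun hx => ⟨e ⟨x, hx⟩, by simp⟩, fun ⟨i, hi⟩ => hi ▸ (e.symm i).2⟩

variable {k : ℕ} {H : Finset (Finset V)} {ℰ : V → Finset (Finset V)}

theorem isFlowerGadget_of_mem_petalCandidates {C : Finset V} {v : Fin k → V}
    {P : Fin k → Finset V} (hC : C ∈ H) (hv : Function.Injective v) (hCv : C = image v univ)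
    (hP : ∀ i, P i ∈ petalCandidates ℰ C v P i) : IsFlowerGadget k H ℰ (C, v, P) := by
  have hP' := fun i => mem_filter.1 (hP i)
  refine ⟨hC, hv, hCv, fun i => (hP' i).1, fun i j hij => ?_, fun i => (hP' i).2.1⟩
  rcases hij.lt_or_gt with h | h
  · exact (hP' j).2.2 i h
  · exact ((hP' i).2.2 j h).symm

variable [Fintype V] {m D : ℕ}

open Classical in
theorem prod_le_card_filter_isFlowerGadget_fst_eq (hunif : ∀ E ∈ H, #E = k)
    (hcodeg : ∀ u w : V, u ≠ w → #{E ∈ H | u ∈ E ∧ w ∈ E} ≤ m)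
    (hℰ : ∀ v, ℰ v ⊆ {E ∈ H | v ∈ E}) (hℰcard : ∀ v, #(ℰ v) = D) {C : Finset V}
    (hC : C ∈ H) :
    ∏ i : Fin k, (D - (i + 1) * k * m) ≤ #{g | IsFlowerGadget k H ℰ g ∧ g.1 = C} := by
  obtain ⟨v, hv, hCv⟩ := exists_injective_image_univ_eq (hunif C hC)
  have hvC : ∀ i, v i ∈ C := fun i => hCv ▸ mem_image_of_mem v (mem_univ i)
  calc ∏ i : Fin k, (D - (i + 1) * k * m)
        ≤ #{P | ∀ i, P i ∈ petalCandidates ℰ C v P i} := by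
        refine prod_le_card_filter_forall_mem _ _ (fun i P Q => petalCandidates_congr)
          fun i P hP => ?_
        have := card_le_card_petalCandidates_add hunif hcodeg hℰ (hunif C hC) hv hvC hP
        rw [hℰcard] at this
        omega
    _ ≤ #{g | IsFlowerGadget k H ℰ g ∧ g.1 = C} := by
        refine card_le_card_of_injOn (fun P => (C, v, P)) (fun P hP => ?_)
          fun P _ Q _ h => congrArg (·.2.2) h
        simp only [mem_coe, mem_filter, mem_univ, true_and] at hP
        exact mem_filter.2 ⟨mem_univ _, isFlowerGadget_of_mem_petalCandidates hC hv hCv hP, rfl⟩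

theorem card_mul_prod_le_card_isFlowerGadget (hunif : ∀ E ∈ H, #E = k)
    (hcodeg : ∀ u w : V, u ≠ w → #{E ∈ H | u ∈ E ∧ w ∈ E} ≤ m)
    (hℰ : ∀ v, ℰ v ⊆ {E ∈ H | v ∈ E}) (hℰcard : ∀ v, #(ℰ v) = D) :
    #H * ∏ i : Fin k, (D - (i + 1) * k * m) ≤ Nat.card {g // IsFlowerGadget k H ℰ g} := by
  classical
  rw [Nat.card_eq_fintype_card, Fintype.card_subtype,
    card_eq_sum_card_fiberwise (f := Prod.fst) (t := H) fun g hg => (mem_filter.1 hg).2.1]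
  simpa [filter_filter] using card_nsmul_le_sum H _ _ fun C hC =>
    prod_le_card_filter_isFlowerGadget_fst_eq hunif hcodeg hℰ hℰcard hC

end Gadgets

section Estimates

theorem two_mul_le_nine_fifths_pow {k : ℕ} (hk : 4 ≤ k) : 2 * (k : ℝ) ≤ (9 / 5) ^ k := by
  induction k, hk using Nat.le_induction with
  | base => norm_num
  | succ k hk ih =>
    have : (4 : ℝ) ≤ k := by exact_mod_cast hk
    rw [pow_succ]
    push_cast
    nlinarith

theorem two_mul_le_prod_two_sub {k : ℕ} (hk : 3 ≤ k) :
    2 * (k : ℝ) ≤ ∏ i ∈ range k, (2 - ((i : ℝ) + 1) / (5 * k)) := by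
  obtain rfl | hk4 := hk.eq_or_lt
  · norm_num [prod_range_succ]
  calc 2 * (k : ℝ) ≤ ∏ _i ∈ range k, (9 / 5 : ℝ) := by
        rw [prod_const, card_range]
        exact two_mul_le_nine_fifths_pow hk4
    _ ≤ ∏ i ∈ range k, (2 - ((i : ℝ) + 1) / (5 * k)) := by
        refine prod_le_prod (fun _ _ => by norm_num) fun i hi => ?_
        have hik : (i : ℝ) + 1 ≤ k := by exact_mod_cast mem_range.1 hi
        have : ((i : ℝ) + 1) / (5 * k) ≤ 1 / 5 := by
          rw [div_le_iff₀ (by positivity)]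
          linarith
        linarith

variable {k d m : ℕ}

theorem le_petal_factor (hm : (m : ℝ) < d / (100 * k ^ 3)) {i : ℕ} (hi : i < k) :
    d / (20 * k) * (2 - ((i : ℝ) + 1) / (5 * k)) ≤ d / (10 * k) - (i + 1) * k * m := by
  have hk : (0 : ℝ) < k := by exact_mod_cast (Nat.zero_le i).trans_lt hi
  have : ((i : ℝ) + 1) * k * m ≤ (i + 1) * k * (d / (100 * k ^ 3)) := by gcongr
  have hid : d / (20 * k) * (2 - ((i : ℝ) + 1) / (5 * k)) =
      d / (10 * k) - (i + 1) * k * (d / (100 * k ^ 3)) := by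
    field_simp
    ring
  linarith

theorem petal_factor_lower_nonneg {i : ℕ} (hi : i < k) :
    0 ≤ (d : ℝ) / (20 * k) * (2 - ((i : ℝ) + 1) / (5 * k)) := by
  have hik : (i : ℝ) + 1 ≤ k := by exact_mod_cast hi
  have : ((i : ℝ) + 1) / (5 * k) ≤ 1 := by
    rw [div_le_one (by linarith)]
    linarith
  have : (0 : ℝ) ≤ 2 - ((i : ℝ) + 1) / (5 * k) := by linarith
  positivity

theorem petal_factor_nonneg (hm : (m : ℝ) < d / (100 * k ^ 3)) {i : ℕ} (hi : i < k) :
    0 ≤ (d : ℝ) / (10 * k) - (i + 1) * k * m :=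
  (petal_factor_lower_nonneg hi).trans (le_petal_factor hm hi)

theorem pow_mul_le_prod_petal_factor (hk : 3 ≤ k) (hm : (m : ℝ) < d / (100 * k ^ 3)) :
    ((d : ℝ) / (20 * k)) ^ k * (2 * k) ≤
      ∏ i ∈ range k, ((d : ℝ) / (10 * k) - (i + 1) * k * m) :=
  calc ((d : ℝ) / (20 * k)) ^ k * (2 * k)
      ≤ ((d : ℝ) / (20 * k)) ^ k * ∏ i ∈ range k, (2 - ((i : ℝ) + 1) / (5 * k)) := by
        gcongr
        exact two_mul_le_prod_two_sub hk
    _ = ∏ i ∈ range k, ((d : ℝ) / (20 * k) * (2 - ((i : ℝ) + 1) / (5 * k))) := by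
        rw [prod_mul_distrib, prod_const, card_range]
    _ ≤ ∏ i ∈ range k, ((d : ℝ) / (10 * k) - (i + 1) * k * m) :=
        prod_le_prod (fun i hi => petal_factor_lower_nonneg (mem_range.1 hi))
          fun i hi => le_petal_factor hm (mem_range.1 hi)

theorem prod_petal_factor_le_cast_prod {D : ℕ} (hD : (D : ℝ) = d / (10 * k))
    (hm : (m : ℝ) < d / (100 * k ^ 3)) :
    ∏ i ∈ range k, ((d : ℝ) / (10 * k) - (i + 1) * k * m) ≤
      ((∏ i : Fin k, (D - (i + 1) * k * m) : ℕ) : ℝ) := by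
  rw [← Fin.prod_univ_eq_prod_range, Nat.cast_prod, ← hD]
  refine prod_le_prod (fun i _ => hD ▸ petal_factor_nonneg hm i.2) fun i _ => ?_
  rcases le_total ((i + 1) * k * m) D with h | h
  · rw [Nat.cast_sub h]
    push_cast
    rfl
  · rw [Nat.sub_eq_zero_of_le h, Nat.cast_zero, sub_nonpos]
    exact_mod_cast h

end Estimates

theorem stmt15_general (n k d m2 : ℕ) (hk3 : 3 ≤ k) (hdvd : 10 * k ∣ d)
    (H : Finset (Finset (Fin n))) (hunif : ∀ E ∈ H, E.card = k)
    (hcard : H.card = n * d)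
    (hcodeg : ∀ u w : Fin n, u ≠ w →
      (H.filter (fun E => u ∈ E ∧ w ∈ E)).card ≤ m2)
    (hm2 : (m2 : ℝ) < (d : ℝ) / (100 * k ^ 3))
    (ℰ : Fin n → Finset (Finset (Fin n)))
    (hℰ : ∀ v : Fin n, ℰ v ⊆ H.filter (fun E => v ∈ E))
    (hℰcard : ∀ v : Fin n, (ℰ v).card = d / (10 * k)) :
    ((Nat.card {g : Finset (Fin n) × (Fin k → Fin n) × (Fin k → Finset (Fin n)) //
        g.1 ∈ H ∧ Function.Injective g.2.1 ∧
        g.1 = Finset.image g.2.1 Finset.univ ∧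
        (∀ i, g.2.2 i ∈ ℰ (g.2.1 i)) ∧
        (∀ i j, i ≠ j → Disjoint (g.2.2 i) (g.2.2 j)) ∧
        (∀ i, g.2.2 i ∩ g.1 = {g.2.1 i})} : ℝ) ≥
      ((n : ℝ) * d / (2 * k)) *
        ∏ i ∈ Finset.range k, ((d : ℝ) / (10 * k) - (i + 1) * k * m2)) ∧
    (((n : ℝ) * d / (2 * k)) *
        ∏ i ∈ Finset.range k, ((d : ℝ) / (10 * k) - (i + 1) * k * m2) ≥
      (n : ℝ) * (d : ℝ) ^ (k + 1) / (20 * k) ^ k) := by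
  have hk : (3 : ℝ) ≤ k := by exact_mod_cast hk3
  have hD : ((d / (10 * k) : ℕ) : ℝ) = d / (10 * k) := by
    rw [Nat.cast_div hdvd (by positivity)]
    push_cast
    rfl
  have hcount := card_mul_prod_le_card_isFlowerGadget hunif hcodeg hℰ hℰcard
  refine ⟨?_, ?_⟩
  · calc (n : ℝ) * d / (2 * k) * ∏ i ∈ range k, ((d : ℝ) / (10 * k) - (i + 1) * k * m2)
        ≤ (n : ℝ) * d * ∏ i ∈ range k, ((d : ℝ) / (10 * k) - (i + 1) * k * m2) := by
          have := prod_nonneg fun i hi => petal_factor_nonneg (d := d) hm2 (mem_range.1 hi)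
          gcongr
          exact div_le_self (by positivity) (by linarith)
      _ ≤ (n : ℝ) * d * ((∏ i : Fin k, (d / (10 * k) - (i + 1) * k * m2) : ℕ) : ℝ) := by
          gcongr
          exact prod_petal_factor_le_cast_prod hD hm2
      _ = ((#H * ∏ i : Fin k, (d / (10 * k) - (i + 1) * k * m2) : ℕ) : ℝ) := by
          rw [hcard]
          push_cast
          rfl
      _ ≤ _ := by exact_mod_cast hcount
  · calc (n : ℝ) * (d : ℝ) ^ (k + 1) / (20 * k) ^ k
        = (n : ℝ) * d / (2 * k) * (((d : ℝ) / (20 * k)) ^ k * (2 * k)) := by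
          rw [div_pow, pow_succ]
          field_simp
      _ ≤ _ := by
          gcongr
          exact pow_mul_le_prod_petal_factor hk3 hm2

/-- Counting flower gadgets: in a `k`-uniform hypergraph (`k` odd, `k ≥ 3`) on `n` vertices
with `n·d` edges, minimum degree at least `d/(10k)`, pairwise codegrees at most
`m₂ < d/(100k³)`, and fixed families `ℰ v` of exactly `d/(10k)` edges through each vertex,
the number of flower gadgets `(C, v, P)` with `Pᵢ ∈ ℰ(vᵢ)` is at least
`(nd/(2k))·∏_{i=1}^{k}(d/(10k) − i·k·m₂) ≥ n·d^{k+1}/(20k)^k`. -/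
theorem stmt15 (n k d m2 : ℕ) (hk : Odd k) (hk3 : 3 ≤ k) (hdvd : 10 * k ∣ d)
    (H : Finset (Finset (Fin n))) (hunif : ∀ E ∈ H, E.card = k)
    (hcard : H.card = n * d)
    (hmindeg : ∀ v : Fin n, d / (10 * k) ≤ (H.filter (fun E => v ∈ E)).card)
    (hcodeg : ∀ u w : Fin n, u ≠ w →
      (H.filter (fun E => u ∈ E ∧ w ∈ E)).card ≤ m2)
    (hm2 : (m2 : ℝ) < (d : ℝ) / (100 * k ^ 3))
    (ℰ : Fin n → Finset (Finset (Fin n)))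
    (hℰ : ∀ v : Fin n, ℰ v ⊆ H.filter (fun E => v ∈ E))
    (hℰcard : ∀ v : Fin n, (ℰ v).card = d / (10 * k)) :
    ((Nat.card {g : Finset (Fin n) × (Fin k → Fin n) × (Fin k → Finset (Fin n)) //
        g.1 ∈ H ∧ Function.Injective g.2.1 ∧
        g.1 = Finset.image g.2.1 Finset.univ ∧
        (∀ i, g.2.2 i ∈ ℰ (g.2.1 i)) ∧
        (∀ i j, i ≠ j → Disjoint (g.2.2 i) (g.2.2 j)) ∧
        (∀ i, g.2.2 i ∩ g.1 = {g.2.1 i})} : ℝ) ≥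
      ((n : ℝ) * d / (2 * k)) *
        ∏ i ∈ Finset.range k, ((d : ℝ) / (10 * k) - (i + 1) * k * m2)) ∧
    (((n : ℝ) * d / (2 * k)) *
        ∏ i ∈ Finset.range k, ((d : ℝ) / (10 * k) - (i + 1) * k * m2) ≥
      (n : ℝ) * (d : ℝ) ^ (k + 1) / (20 * k) ^ k) :=
  stmt15_general n k d m2 hk3 hdvd H hunif hcard hcodeg hm2 ℰ hℰ hℰcard
end

section
/- For a hypergraph H on n vertices with n·d edges and parameters m, t: running the process that repeatedly finds a t-set R with deg(R) ≥ m in the current hypergraph and removes exactly m edges containing R, the process terminates, and at termination either the removed edges form a hypergraph with an (m,t)-bucket decomposition of size at least e, or the remaining hypergraph has at least e(H) − e edges and all t-sets of codegree less than m. -/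
lemma bucket_aux {n : ℕ} (m t : ℕ) (hm : 0 < m) :
    ∀ N e (H : Finset (Finset (Fin n))), H.card ≤ N → e ≤ H.card →
    ∃ B ⊆ H, HasBucketDecomp B m t ∧
      (e ≤ B.card ∨
        (H.card - e ≤ (H \ B).card ∧
          ∀ R : Finset (Fin n), R.card = t →
            ((H \ B).filter (fun E => R ⊆ E)).card < m)) := by
  intro N
  induction N with
  | zero =>
    intro e H hN he
    refine ⟨∅, Finset.empty_subset _, ⟨(Finpartition.empty _).copy rfl, by simp⟩, ?_⟩
    right
    constructor
    · simp [Finset.sdiff_empty]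
    · intro R _
      calc ((H \ ∅).filter (fun E => R ⊆ E)).card ≤ H.card := by
            simp [Finset.sdiff_empty]; exact Finset.card_filter_le _ _
        _ < m := by omega
  | succ N ih =>
    intro e H hN he
    by_cases hdeg : ∃ R : Finset (Fin n), R.card = t ∧ m ≤ (H.filter (fun E => R ⊆ E)).card
    · obtain ⟨R, hR, hRm⟩ := hdeg
      obtain ⟨S, hSsub, hScard⟩ := Finset.exists_subset_card_eq hRm
      have hSH : S ⊆ H := hSsub.trans (Finset.filter_subset _ _)
      have hSR : ∀ E ∈ S, R ⊆ E := fun E hE => (Finset.mem_filter.1 (hSsub hE)).2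
      have hSne : S ≠ ∅ := by
        intro h; rw [h] at hScard; simp at hScard; omega
      by_cases hme : e ≤ m
      · refine ⟨S, hSH, ⟨Finpartition.indiscrete hSne, ?_⟩, Or.inl (by omega)⟩
        intro B hB
        simp only [Finpartition.indiscrete_parts, Finset.mem_singleton] at hB
        subst hB
        exact ⟨hScard, R, hR, hSR⟩
      · -- recurse
        have hcardS : (H \ S).card = H.card - m := by
          rw [Finset.card_sdiff_of_subset hSH, hScard]
        have hrec := ih (e - m) (H \ S) (by omega) (by omega)
        obtain ⟨B', hB'sub, ⟨P, hP⟩, hcase⟩ := hrec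
        have hdisj : Disjoint B' S := by
          refine Finset.disjoint_left.2 fun x hx hxS => ?_
          exact (Finset.mem_sdiff.1 (hB'sub hx)).2 hxS
        refine ⟨B' ∪ S, ?_, ?_, ?_⟩
        · exact Finset.union_subset (hB'sub.trans Finset.sdiff_subset) hSH
        · refine ⟨P.extend hSne hdisj rfl, ?_⟩
          intro B hB
          simp only [Finpartition.extend_parts, Finset.mem_insert] at hB
          rcases hB with rfl | hB
          · exact ⟨hScard, R, hR, hSR⟩
          · exact hP B hB
        · have hcardU : (B' ∪ S).card = B'.card + m := by
            rw [Finset.card_union_of_disjoint hdisj, hScard]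
          rcases hcase with h | ⟨h1, h2⟩
          · left; omega
          · right
            have hHB : H \ (B' ∪ S) = (H \ S) \ B' := by
              ext x; simp only [Finset.mem_sdiff, Finset.mem_union]; tauto
            constructor
            · rw [hHB]; omega
            · intro R' hR'
              rw [hHB]
              exact h2 R' hR'
    · push_neg at hdeg
      refine ⟨∅, Finset.empty_subset _, ⟨(Finpartition.empty _).copy rfl, by simp⟩, Or.inr ?_⟩
      constructor
      · simp [Finset.sdiff_empty]
      · intro R hR
        have := hdeg R hR
        simpa [Finset.sdiff_empty] using this

/-- The removal process terminates: there is a set `B ⊆ H` of removed edges admitting an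
`(m,t)`-bucket decomposition such that either `B` has at least `e` edges, or the remaining
hypergraph `H \ B` has at least `e(H) − e` edges and every `t`-set has codegree less than
`m` in it. -/
theorem stmt17 (n d m t e : ℕ) (hm : 0 < m)
    (H : Finset (Finset (Fin n))) (hcard : H.card = n * d) (he : e ≤ H.card) :
    ∃ B ⊆ H, HasBucketDecomp B m t ∧
      (e ≤ B.card ∨
        (H.card - e ≤ (H \ B).card ∧
          ∀ R : Finset (Fin n), R.card = t →
            ((H \ B).filter (fun E => R ⊆ E)).card < m)) := by
  exact bucket_aux m t hm H.card e H le_rfl he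
end
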